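/- arXiv:1704.08574 — 3 statements merged into one kernel-verified Lean document; each statement's English description precedes it below -/
import Mathlib

section
/- Let φ be a finite signed measure on ℝ concentrated on (0,∞) with |φ|((0,∞)) < 1 and let θ ∈ L²(ℝ) vanish on (−∞,0). Then: (1) for each n ∈ ℕ₀ the function θ∗φ^{∗n}(t) = ∫ θ(t−u) dφ^{∗n}(u) belongs to L²(ℝ) with ‖θ∗φ^{∗n}‖_{L²} ≤ ‖θ‖_{L²} · (|φ|((0,∞)))^n; (2) the series ψ := Σ_{n=0}^∞ θ∗φ^{∗n} converges in L²(ℝ); and (3) ψ(t) = 0 for Lebesgue-almost all t < 0. -/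
open MeasureTheory Complex Set Filter
open scoped ENNReal Topology

/-- The `n`-fold convolution power of the finite signed measure `φ = φp - φm`, represented
as a pair (positive part, negative part): `φ^{∗0} = δ₀` and `φ^{∗(n+1)} = φ^{∗n} ∗ φ`. -/
noncomputable def convPow (φp φm : Measure ℝ) : ℕ → Measure ℝ × Measure ℝ
  | 0 => (Measure.dirac 0, 0)
  | n + 1 =>
      ((convPow φp φm n).1.conv φp + (convPow φp φm n).2.conv φm,
       (convPow φp φm n).1.conv φm + (convPow φp φm n).2.conv φp)

/-- `θ ∗ μ (t) = ∫ θ(t-u) dμ(u)` for the signed measure `μ = μ.1 - μ.2`. -/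
noncomputable def convKernel (θ : ℝ → ℝ) (μ : Measure ℝ × Measure ℝ) (t : ℝ) : ℝ :=
  (∫ u : ℝ, θ (t - u) ∂μ.1) - ∫ u : ℝ, θ (t - u) ∂μ.2

/-! Translation invariance of Lebesgue measure together with Jensen's inequality for the finite
measure `μ` gives the Young-type bound `‖θ ∗ μ‖_p ≤ ‖θ‖_p μ(ℝ)`. The positive and negative parts of
`φ^{∗n}` together have mass `|φ|(ℝ)ⁿ`, so the terms of the series decay geometrically in `L²`; the
series therefore converges in `L²` and also almost everywhere to the same limit. Each term vanishes
on `(-∞, 0)`, because `θ` does and `φ^{∗n}` lives on `[0, ∞)`, hence so does the limit. -/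

theorem rpow_lintegral_enorm_le {α E : Type*} [MeasurableSpace α] [NormedAddCommGroup E]
    {μ : Measure α} {f : α → E} {q : ℝ} (hq : 1 ≤ q) (hf : AEStronglyMeasurable f μ) :
    (∫⁻ x, ‖f x‖ₑ ∂μ) ^ q ≤ μ univ ^ (q - 1) * ∫⁻ x, ‖f x‖ₑ ^ q ∂μ := by
  have h := eLpNorm'_le_eLpNorm'_mul_rpow_measure_univ one_pos hq hf
  simp only [eLpNorm'_eq_lintegral_enorm, ENNReal.rpow_one, div_one] at h
  have hq0 : 0 < q := one_pos.trans_le hq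
  calc (∫⁻ x, ‖f x‖ₑ ∂μ) ^ q
      ≤ ((∫⁻ x, ‖f x‖ₑ ^ q ∂μ) ^ (1 / q) * μ univ ^ (1 - 1 / q)) ^ q :=
        ENNReal.rpow_le_rpow h hq0.le
    _ = μ univ ^ (q - 1) * ∫⁻ x, ‖f x‖ₑ ^ q ∂μ := by
        rw [ENNReal.mul_rpow_of_nonneg _ _ hq0.le, ← ENNReal.rpow_mul, ← ENNReal.rpow_mul,
          mul_comm, one_div_mul_cancel hq0.ne', ENNReal.rpow_one, sub_mul,
          one_div_mul_cancel hq0.ne', one_mul]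

section Translation

variable {G E : Type*} [MeasurableSpace G] [AddGroup G] [MeasurableAdd₂ G] [MeasurableNeg G]
  {ν μ : Measure G} [SFinite ν] [NormedAddCommGroup E] [NormedSpace ℝ E]
  {θ θ' : G → E}

theorem MeasureTheory.AEStronglyMeasurable.integral_sub_right [SFinite μ] [ν.IsAddRightInvariant]
    (hθ : AEStronglyMeasurable θ ν) : AEStronglyMeasurable (fun t => ∫ u, θ (t - u) ∂μ) ν :=
  (hθ.comp_quasiMeasurePreserving
    (quasiMeasurePreserving_sub_of_right_invariant ν μ)).integral_prod_right'

theorem integral_sub_right_congr_ae [SFinite μ] [ν.IsAddRightInvariant] (h : θ =ᵐ[ν] θ') :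
    (fun t => ∫ u, θ (t - u) ∂μ) =ᵐ[ν] fun t => ∫ u, θ' (t - u) ∂μ := by
  have h' := (quasiMeasurePreserving_sub_of_right_invariant ν μ).ae_eq h
  filter_upwards [Measure.ae_ae_of_ae_prod h'] with t ht using integral_congr_ae ht

theorem lintegral_enorm_integral_sub_right_rpow_le [ν.IsAddRightInvariant] [IsFiniteMeasure μ]
    {q : ℝ} (hq : 1 ≤ q) (hθ : StronglyMeasurable θ) :
    ∫⁻ t, ‖∫ u, θ (t - u) ∂μ‖ₑ ^ q ∂ν ≤ μ univ ^ q * ∫⁻ t, ‖θ t‖ₑ ^ q ∂ν := by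
  have hq0 : 0 ≤ q := zero_le_one.trans hq
  have hmeas : Measurable fun p : G × G => ‖θ (p.1 - p.2)‖ₑ ^ q :=
    (hθ.comp_measurable measurable_sub).enorm.pow_const q
  calc ∫⁻ t, ‖∫ u, θ (t - u) ∂μ‖ₑ ^ q ∂ν
      ≤ ∫⁻ t, (∫⁻ u, ‖θ (t - u)‖ₑ ∂μ) ^ q ∂ν :=
        lintegral_mono fun t => ENNReal.rpow_le_rpow (enorm_integral_le_lintegral_enorm _) hq0
    _ ≤ ∫⁻ t, μ univ ^ (q - 1) * ∫⁻ u, ‖θ (t - u)‖ₑ ^ q ∂μ ∂ν :=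
        lintegral_mono fun t => rpow_lintegral_enorm_le hq
          (hθ.comp_measurable (by fun_prop)).aestronglyMeasurable
    _ = μ univ ^ (q - 1) * ∫⁻ u, ∫⁻ t, ‖θ (t - u)‖ₑ ^ q ∂ν ∂μ := by
        rw [lintegral_const_mul _ hmeas.lintegral_prod_right',
          lintegral_lintegral_swap hmeas.aemeasurable]
    _ = μ univ ^ q * ∫⁻ t, ‖θ t‖ₑ ^ q ∂ν := by
        simp_rw [lintegral_sub_right_eq_self (fun t => ‖θ t‖ₑ ^ q), lintegral_const]
        have hpow : μ univ ^ (q - 1) * μ univ = μ univ ^ q := by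
          conv_rhs => rw [← sub_add_cancel q 1]
          rw [ENNReal.rpow_add_of_nonneg _ _ (sub_nonneg.2 hq) zero_le_one, ENNReal.rpow_one]
        rw [← hpow]
        ring

theorem eLpNorm_integral_sub_right_le [ν.IsAddRightInvariant] [IsFiniteMeasure μ] {p : ℝ≥0∞}
    (hp : 1 ≤ p) (hp_top : p ≠ ∞) (hθ : AEStronglyMeasurable θ ν) :
    eLpNorm (fun t => ∫ u, θ (t - u) ∂μ) p ν ≤ eLpNorm θ p ν * μ univ := by
  rw [eLpNorm_congr_ae (integral_sub_right_congr_ae hθ.ae_eq_mk), eLpNorm_congr_ae hθ.ae_eq_mk,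
    eLpNorm_eq_lintegral_rpow_enorm_toReal (by positivity) hp_top,
    eLpNorm_eq_lintegral_rpow_enorm_toReal (by positivity) hp_top]
  have hq : 1 ≤ p.toReal := by simpa using ENNReal.toReal_mono hp_top hp
  have hq0 : 0 < p.toReal := one_pos.trans_le hq
  calc (∫⁻ t, ‖∫ u, hθ.mk θ (t - u) ∂μ‖ₑ ^ p.toReal ∂ν) ^ (1 / p.toReal)
      ≤ (μ univ ^ p.toReal * ∫⁻ t, ‖hθ.mk θ t‖ₑ ^ p.toReal ∂ν) ^ (1 / p.toReal) :=
        ENNReal.rpow_le_rpow (lintegral_enorm_integral_sub_right_rpow_le hq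
          hθ.stronglyMeasurable_mk) (by positivity)
    _ = (∫⁻ t, ‖hθ.mk θ t‖ₑ ^ p.toReal ∂ν) ^ (1 / p.toReal) * μ univ := by
        rw [ENNReal.mul_rpow_of_nonneg _ _ (by positivity), ← ENNReal.rpow_mul,
          mul_one_div_cancel hq0.ne', ENNReal.rpow_one, mul_comm]

theorem MeasureTheory.MemLp.integral_sub_right [ν.IsAddRightInvariant] [IsFiniteMeasure μ]
    {p : ℝ≥0∞} (hp : 1 ≤ p) (hp_top : p ≠ ∞) (hθ : MemLp θ p ν) :
    MemLp (fun t => ∫ u, θ (t - u) ∂μ) p ν :=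
  ⟨hθ.1.integral_sub_right, (eLpNorm_integral_sub_right_le hp hp_top hθ.1).trans_lt
    (ENNReal.mul_lt_top hθ.2 (measure_lt_top μ univ))⟩

end Translation

theorem exists_memLp_tendsto_eLpNorm_sum_sub {α E : Type*} [MeasurableSpace α]
    [NormedAddCommGroup E] [CompleteSpace E] {μ : Measure α} {p : ℝ≥0∞} [Fact (1 ≤ p)]
    {f : ℕ → α → E} (hf : ∀ n, MemLp (f n) p μ) (hsum : ∑' n, eLpNorm (f n) p μ ≠ ∞) :
    ∃ g : α → E, MemLp g p μ ∧
      Tendsto (fun N => eLpNorm (fun x => ∑ n ∈ Finset.range N, f n x - g x) p μ) atTop (𝓝 0) ∧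
      ∀ᵐ x ∂μ, HasSum (fun n => f n x) (g x) := by
  set F : ℕ → Lp E p μ := fun n => (hf n).toLp (f n)
  have hF : ∑' n, ‖F n‖ₑ ≠ ∞ := by simpa only [F, Lp.enorm_toLp] using hsum
  have hFf : ∀ᵐ x ∂μ, ∀ n, F n x = f n x := ae_all_iff.2 fun n => (hf n).coeFn_toLp
  refine ⟨⇑(∑' n, F n), Lp.memLp _, ?_, ?_⟩
  · have hlim := (Lp.tendsto_Lp_iff_tendsto_eLpNorm' _ _).1
      (Summable.of_enorm hF).tendsto_sum_tsum_nat
    refine hlim.congr fun N => eLpNorm_congr_ae ?_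
    filter_upwards [Lp.coeFn_fun_finsetSum (Finset.range N) F, hFf] with x hsum hx
    simp only [Pi.sub_apply, hsum, hx]
  · filter_upwards [Lp.hasSum_coeFn_tsum hF, hFf] with x hsum hx
    simpa only [hx] using hsum

theorem MeasureTheory.Measure.conv_apply_univ {M : Type*} [AddMonoid M] [MeasurableSpace M]
    [MeasurableAdd₂ M] (μ ν : Measure M) [SFinite ν] :
    (μ.conv ν) univ = μ univ * ν univ := by
  rw [Measure.conv, Measure.map_apply (by fun_prop) MeasurableSet.univ, preimage_univ,
    ← univ_prod_univ, Measure.prod_prod]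

theorem ae_nonneg_conv {μ ν : Measure ℝ} [SFinite ν] (hμ : ∀ᵐ x ∂μ, 0 ≤ x)
    (hν : ∀ᵐ x ∂ν, 0 ≤ x) : ∀ᵐ x ∂(μ.conv ν), 0 ≤ x := by
  rw [Measure.conv, ae_map_iff (by fun_prop) measurableSet_Ici]
  filter_upwards [Measure.quasiMeasurePreserving_fst.ae hμ,
    Measure.quasiMeasurePreserving_snd.ae hν] with p h₁ h₂ using add_nonneg h₁ h₂

section ConvPow

variable (φp φm : Measure ℝ) [IsFiniteMeasure φp] [IsFiniteMeasure φm]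

theorem isFiniteMeasure_convPow (n : ℕ) :
    IsFiniteMeasure (convPow φp φm n).1 ∧ IsFiniteMeasure (convPow φp φm n).2 := by
  induction n with
  | zero => exact ⟨inferInstanceAs (IsFiniteMeasure (Measure.dirac 0)),
      inferInstanceAs (IsFiniteMeasure 0)⟩
  | succ n ih =>
    obtain ⟨_, _⟩ := ih
    exact ⟨by dsimp only [convPow]; infer_instance, by dsimp only [convPow]; infer_instance⟩

instance (n : ℕ) : IsFiniteMeasure (convPow φp φm n).1 := (isFiniteMeasure_convPow φp φm n).1

instance (n : ℕ) : IsFiniteMeasure (convPow φp φm n).2 := (isFiniteMeasure_convPow φp φm n).2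

theorem convPow_fst_add_snd_apply_univ (n : ℕ) :
    (convPow φp φm n).1 univ + (convPow φp φm n).2 univ = (φp univ + φm univ) ^ n := by
  induction n with
  | zero => simp [convPow]
  | succ n ih =>
    simp only [convPow, Measure.add_apply, Measure.conv_apply_univ, pow_succ, ← ih]
    ring

variable {φp φm} in
theorem ae_nonneg_convPow (hp : ∀ᵐ x ∂φp, 0 ≤ x) (hm : ∀ᵐ x ∂φm, 0 ≤ x) (n : ℕ) :
    (∀ᵐ x ∂(convPow φp φm n).1, 0 ≤ x) ∧ ∀ᵐ x ∂(convPow φp φm n).2, 0 ≤ x := by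
  induction n with
  | zero => exact ⟨(ae_dirac_iff measurableSet_Ici).2 le_rfl, by simp [convPow]⟩
  | succ n ih =>
    simp only [convPow, ae_add_measure_iff]
    exact ⟨⟨ae_nonneg_conv ih.1 hp, ae_nonneg_conv ih.2 hm⟩,
      ⟨ae_nonneg_conv ih.1 hm, ae_nonneg_conv ih.2 hp⟩⟩

end ConvPow

section ConvKernel

variable {θ : ℝ → ℝ} {μ : Measure ℝ × Measure ℝ}

theorem convKernel_eq_zero_of_neg (hθ : ∀ t < 0, θ t = 0) (h₁ : ∀ᵐ u ∂μ.1, 0 ≤ u)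
    (h₂ : ∀ᵐ u ∂μ.2, 0 ≤ u) {t : ℝ} (ht : t < 0) : convKernel θ μ t = 0 := by
  have hvanish (ν : Measure ℝ) (hν : ∀ᵐ u ∂ν, 0 ≤ u) : ∫ u, θ (t - u) ∂ν = 0 :=
    integral_eq_zero_of_ae (hν.mono fun u hu => hθ _ (by linarith))
  rw [convKernel, hvanish _ h₁, hvanish _ h₂, sub_zero]

variable [IsFiniteMeasure μ.1] [IsFiniteMeasure μ.2] {p : ℝ≥0∞}

theorem eLpNorm_convKernel_le (hp : 1 ≤ p) (hp_top : p ≠ ∞) (hθ : AEStronglyMeasurable θ) :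
    eLpNorm (convKernel θ μ) p volume ≤ eLpNorm θ p volume * (μ.1 univ + μ.2 univ) :=
  calc eLpNorm (convKernel θ μ) p volume
      ≤ eLpNorm (fun t => ∫ u, θ (t - u) ∂μ.1) p volume
        + eLpNorm (fun t => ∫ u, θ (t - u) ∂μ.2) p volume :=
        eLpNorm_sub_le hθ.integral_sub_right hθ.integral_sub_right hp
    _ ≤ eLpNorm θ p volume * μ.1 univ + eLpNorm θ p volume * μ.2 univ :=
        add_le_add (eLpNorm_integral_sub_right_le hp hp_top hθ)
          (eLpNorm_integral_sub_right_le hp hp_top hθ)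
    _ = eLpNorm θ p volume * (μ.1 univ + μ.2 univ) := (mul_add _ _ _).symm

theorem MeasureTheory.MemLp.convKernel (hp : 1 ≤ p) (hp_top : p ≠ ∞) (hθ : MemLp θ p) :
    MemLp (convKernel θ μ) p :=
  (hθ.integral_sub_right hp hp_top).sub (hθ.integral_sub_right hp hp_top)

end ConvKernel

theorem statement10_general
    (φp φm : Measure ℝ) [IsFiniteMeasure φp] [IsFiniteMeasure φm]
    (hconcp : φp (Set.Iic 0) = 0) (hconcm : φm (Set.Iic 0) = 0)
    (hcontr : φp Set.univ + φm Set.univ < 1)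
    (θ : ℝ → ℝ) (hθ : MemLp θ 2 volume) (hθ0 : ∀ t : ℝ, t < 0 → θ t = 0) :
    (∀ n : ℕ,
      MemLp (convKernel θ (convPow φp φm n)) 2 volume ∧
      eLpNorm (convKernel θ (convPow φp φm n)) 2 volume ≤
        eLpNorm θ 2 volume * (φp Set.univ + φm Set.univ) ^ n) ∧
    ∃ ψ : ℝ → ℝ, MemLp ψ 2 volume ∧
      Tendsto
        (fun N : ℕ =>
          eLpNorm
            (fun t : ℝ =>
              (∑ n ∈ Finset.range N, convKernel θ (convPow φp φm n) t) - ψ t) 2 volume)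
        atTop (𝓝 0) ∧
      (∀ᵐ t : ℝ ∂volume, t < 0 → ψ t = 0) := by
  have hnonneg {ν : Measure ℝ} (h : ν (Iic 0) = 0) : ∀ᵐ u ∂ν, 0 ≤ u :=
    measure_mono_null (fun u (hu : ¬0 ≤ u) => (not_le.1 hu).le) h
  have hterm (n : ℕ) : MemLp (convKernel θ (convPow φp φm n)) 2 volume ∧
      eLpNorm (convKernel θ (convPow φp φm n)) 2 volume ≤
        eLpNorm θ 2 volume * (φp univ + φm univ) ^ n :=
    ⟨hθ.convKernel one_le_two ENNReal.ofNat_ne_top, convPow_fst_add_snd_apply_univ φp φm n ▸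
      eLpNorm_convKernel_le one_le_two ENNReal.ofNat_ne_top hθ.1⟩
  have hsum : ∑' n, eLpNorm (convKernel θ (convPow φp φm n)) 2 volume ≠ ∞ := by
    refine ne_top_of_le_ne_top ?_ (ENNReal.tsum_le_tsum fun n => (hterm n).2)
    rw [ENNReal.tsum_mul_left, ENNReal.tsum_geometric]
    exact ENNReal.mul_ne_top hθ.2.ne (ENNReal.inv_ne_top.2 (tsub_pos_of_lt hcontr).ne')
  obtain ⟨ψ, hψ, hlim, hhasSum⟩ :=
    exists_memLp_tendsto_eLpNorm_sum_sub (p := 2) (fun n => (hterm n).1) hsum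
  refine ⟨hterm, ψ, hψ, hlim, ?_⟩
  filter_upwards [hhasSum] with t ht htneg
  have hzero : (fun n => convKernel θ (convPow φp φm n) t) = 0 := funext fun n =>
    have hn := ae_nonneg_convPow (hnonneg hconcp) (hnonneg hconcm) n
    convKernel_eq_zero_of_neg hθ0 hn.1 hn.2 htneg
  exact ht.unique (hzero ▸ hasSum_zero)

/-- Theorem 3.1, construction of the kernel. Let `φ` be a finite signed
measure on `(0,∞)` with `|φ|((0,∞)) < 1` and `θ ∈ L²` vanishing on `(-∞,0)`. Then each
`θ ∗ φ^{∗n} ∈ L²` with `‖θ ∗ φ^{∗n}‖₂ ≤ ‖θ‖₂ |φ|((0,∞))ⁿ`, the series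
`ψ = Σₙ θ ∗ φ^{∗n}` converges in `L²`, and `ψ = 0` a.e. on `(-∞,0)`. -/
theorem statement10
    (φp φm : Measure ℝ) [IsFiniteMeasure φp] [IsFiniteMeasure φm]
    (hsing : φp ⟂ₘ φm) (hconcp : φp (Set.Iic 0) = 0) (hconcm : φm (Set.Iic 0) = 0)
    (hcontr : φp Set.univ + φm Set.univ < 1)
    (θ : ℝ → ℝ) (hθ : MemLp θ 2 volume) (hθ0 : ∀ t : ℝ, t < 0 → θ t = 0) :
    (∀ n : ℕ,
      MemLp (convKernel θ (convPow φp φm n)) 2 volume ∧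
      eLpNorm (convKernel θ (convPow φp φm n)) 2 volume ≤
        eLpNorm θ 2 volume * (φp Set.univ + φm Set.univ) ^ n) ∧
    ∃ ψ : ℝ → ℝ, MemLp ψ 2 volume ∧
      Tendsto
        (fun N : ℕ =>
          eLpNorm
            (fun t : ℝ =>
              (∑ n ∈ Finset.range N, convKernel θ (convPow φp φm n) t) - ψ t) 2 volume)
        atTop (𝓝 0) ∧
      (∀ᵐ t : ℝ ∂volume, t < 0 → ψ t = 0) :=
  statement10_general φp φm hconcp hconcm hcontr θ hθ hθ0
end

section
/- Let β, γ > 0 and α₁, α₂ ∈ ℝ, and let η be the finite signed measure η(dv) = α₁ δ₀(dv) + (α₂/Γ(β)) v^{β−1} e^{−γv} 1_{(0,∞)}(v) dv. Then for every z ∈ ℂ with Re(z) ≤ 0 one has h(z) = −z − α₁ − α₂ (γ − z)^{−β} (with the principal branch of the complex power), and if α₁ < 0 and α₁ + |α₂| γ^{−β} < 0, then h(z) ≠ 0 for all z ∈ ℂ with Re(z) ≤ 0. -/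
open MeasureTheory Complex Set
open scoped ENNReal Real

/-- `h(z) = -z - ∫_{[0,∞)} e^{zv} dη(v)` for the gamma-type delay measure
`η(dv) = α₁ δ₀(dv) + (α₂/Γ(β)) v^{β-1} e^{-γv} 1_{(0,∞)}(v) dv`. -/
noncomputable def hGamma (α₁ α₂ β γ : ℝ) (z : ℂ) : ℂ :=
  -z - ((α₁ : ℂ) + ∫ v in Set.Ioi (0 : ℝ),
    Complex.exp (z * v) * (((α₂ / Real.Gamma β) * v ^ (β - 1) * Real.exp (-γ * v) : ℝ) : ℂ))

/-!
The integral in `h` is a Laplace transform: `∫₀^∞ t^(a-1) e^(-wt) dt = Γ(a) w^(-a)` for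
`Re w > 0`. For real `w > 0` this is `Complex.integral_cpow_mul_exp_neg_mul_Ioi`; both sides are
holomorphic on the right half-plane, so the identity theorem extends it. Taking `w = γ - z` gives
the formula for `h`. For `Re z ≤ 0` we have `Re (γ - z) ≥ γ`, hence
`|α₂ (γ - z)^(-β)| ≤ |α₂| γ^(-β)` and `Re h(z) ≥ -α₁ - |α₂| γ^(-β) > 0`.
-/

open Filter Topology

namespace Complex

lemma norm_ofReal_cpow_mul_cexp_neg_mul {t : ℝ} (ht : 0 < t) (s w : ℂ) :
    ‖(t : ℂ) ^ s * cexp (-(w * t))‖ = t ^ s.re * Real.exp (-(w.re * t)) := by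
  rw [norm_mul, norm_cpow_eq_rpow_re_of_pos ht, norm_exp]
  simp

lemma continuousOn_ofReal_cpow_mul_cexp_neg_mul (s w : ℂ) :
    ContinuousOn (fun t : ℝ => (t : ℂ) ^ s * cexp (-(w * t))) (Ioi 0) := by
  refine ContinuousOn.mul (fun t ht => ?_) (by fun_prop)
  exact (continuousAt_ofReal_cpow_const t s (Or.inr (ne_of_gt ht))).continuousWithinAt

lemma integrableOn_cpow_mul_cexp_neg_mul_Ioi {s w : ℂ} (hs : -1 < s.re) (hw : 0 < w.re) :
    IntegrableOn (fun t : ℝ => (t : ℂ) ^ s * cexp (-(w * t))) (Ioi 0) := by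
  refine Integrable.mono' (g := fun t => t ^ s.re * Real.exp (-w.re * t ^ (1 : ℝ)))
    (integrableOn_rpow_mul_exp_neg_mul_rpow hs one_pos hw)
    ((continuousOn_ofReal_cpow_mul_cexp_neg_mul s w).aestronglyMeasurable measurableSet_Ioi) ?_
  filter_upwards [ae_restrict_mem measurableSet_Ioi] with t ht
  rw [norm_ofReal_cpow_mul_cexp_neg_mul ht, Real.rpow_one, neg_mul]

lemma hasDerivAt_integral_cpow_mul_cexp_neg_mul_Ioi {a w : ℂ} (ha : 0 < a.re) (hw : 0 < w.re) :
    HasDerivAt (fun w : ℂ => ∫ t : ℝ in Ioi 0, (t : ℂ) ^ (a - 1) * cexp (-(w * t)))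
      (-∫ t : ℝ in Ioi 0, (t : ℂ) ^ a * cexp (-(w * t))) w := by
  have hball : ∀ x ∈ Metric.ball w (w.re / 2), w.re / 2 ≤ x.re := fun x hx => by
    have := (abs_re_le_norm (x - w)).trans_lt (mem_ball_iff_norm.mp hx)
    rw [sub_re] at this
    linarith [(abs_lt.mp this).1]
  have hderiv := hasDerivAt_integral_of_dominated_loc_of_deriv_le
    (μ := volume.restrict (Ioi 0))
    (F' := fun x t => -((t : ℂ) ^ a * cexp (-(x * t))))
    (bound := fun t => t ^ a.re * Real.exp (-(w.re / 2 * t)))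
    (Metric.ball_mem_nhds w (half_pos hw))
    (.of_forall fun x => (continuousOn_ofReal_cpow_mul_cexp_neg_mul _ x).aestronglyMeasurable
      measurableSet_Ioi)
    (integrableOn_cpow_mul_cexp_neg_mul_Ioi (s := a - 1) (by simpa using ha) hw)
    ((continuousOn_ofReal_cpow_mul_cexp_neg_mul _ w).neg.aestronglyMeasurable measurableSet_Ioi)
    ?_ ?_ ?_
  · simpa only [integral_neg] using hderiv.2
  · filter_upwards [ae_restrict_mem measurableSet_Ioi] with t ht x hx
    rw [norm_neg, norm_ofReal_cpow_mul_cexp_neg_mul ht]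
    gcongr
    exacts [(Real.rpow_pos_of_pos ht _).le, le_of_lt ht, hball x hx]
  · simpa [IntegrableOn] using
      integrableOn_rpow_mul_exp_neg_mul_rpow (p := 1) (by linarith) one_pos (half_pos hw)
  · filter_upwards [ae_restrict_mem measurableSet_Ioi] with t ht x _
    have ht0 : (t : ℂ) ≠ 0 := ofReal_ne_zero.mpr (ne_of_gt ht)
    refine ((((hasDerivAt_id x).mul_const (t : ℂ)).neg).cexp.const_mul
      ((t : ℂ) ^ (a - 1))).congr_deriv ?_
    simp only [Pi.neg_apply, id, one_mul, cpow_sub _ _ ht0, cpow_one]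
    field_simp

theorem integral_cpow_mul_cexp_neg_mul_Ioi {a w : ℂ} (ha : 0 < a.re) (hw : 0 < w.re) :
    ∫ t : ℝ in Ioi 0, (t : ℂ) ^ (a - 1) * cexp (-(w * t)) = Gamma a * w ^ (-a) := by
  set U : Set ℂ := {w | 0 < w.re}
  have hF : AnalyticOnNhd ℂ (fun w : ℂ => ∫ t : ℝ in Ioi 0, (t : ℂ) ^ (a - 1) * cexp (-(w * t)))
      U :=
    DifferentiableOn.analyticOnNhd (fun w hw =>
      (hasDerivAt_integral_cpow_mul_cexp_neg_mul_Ioi ha hw).differentiableAt.differentiableWithinAt)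
      (isOpen_lt continuous_const continuous_re)
  have hG : AnalyticOnNhd ℂ (fun w : ℂ => Gamma a * w ^ (-a)) U :=
    DifferentiableOn.analyticOnNhd (fun w hw =>
      ((differentiableAt_id.cpow_const (mem_slitPlane_iff.mpr (Or.inl hw))).const_mul
        _).differentiableWithinAt) (isOpen_lt continuous_const continuous_re)
  have h_real : ∀ᶠ r : ℝ in 𝓝[≠] 1, ∫ t : ℝ in Ioi 0, (t : ℂ) ^ (a - 1) * cexp (-(r * t)) =
      Gamma a * (r : ℂ) ^ (-a) := by
    filter_upwards [eventually_nhdsWithin_of_eventually_nhds (Ioi_mem_nhds one_pos)] with r hr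
    rw [integral_cpow_mul_exp_neg_mul_Ioi ha hr, one_div,
      inv_cpow _ _ (by rw [arg_ofReal_of_nonneg hr.le]; exact Real.pi_ne_zero.symm), ← cpow_neg,
      mul_comm]
  have h_tendsto : Tendsto ofReal (𝓝[≠] 1) (𝓝[≠] (1 : ℂ)) :=
    continuous_ofReal.continuousWithinAt.tendsto_nhdsWithin fun _ _ ↦ by simp_all
  exact hF.eqOn_of_preconnected_of_frequently_eq hG (convex_halfSpace_re_gt 0).isPreconnected
    (by simp [U]) (h_tendsto.frequently h_real.frequently) hw

end Complex

theorem norm_cpow_neg_le {w : ℂ} {β γ : ℝ} (hβ : 0 ≤ β) (hγ : 0 < γ) (hw : γ ≤ w.re) :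
    ‖w ^ (-β : ℂ)‖ ≤ γ ^ (-β) := by
  rw [← ofReal_neg, norm_cpow_real]
  exact Real.rpow_le_rpow_of_nonpos hγ (hw.trans (re_le_norm w)) (neg_nonpos.mpr hβ)

theorem hGamma_eq {α₁ α₂ β γ : ℝ} (hβ : 0 < β) (hγ : 0 < γ) {z : ℂ} (hz : z.re ≤ 0) :
    hGamma α₁ α₂ β γ z = -z - α₁ - α₂ * ((γ : ℂ) - z) ^ (-β : ℂ) := by
  have hw : 0 < ((γ : ℂ) - z).re := by simp only [sub_re, ofReal_re]; linarith
  have h_integrand : ∀ v ∈ Ioi (0 : ℝ),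
      cexp (z * v) * (((α₂ / Real.Gamma β) * v ^ (β - 1) * Real.exp (-γ * v) : ℝ) : ℂ) =
        (α₂ / Real.Gamma β : ℂ) * ((v : ℂ) ^ ((β : ℂ) - 1) * cexp (-(((γ : ℂ) - z) * v))) := by
    intro v hv
    push_cast
    rw [ofReal_cpow hv.le, ofReal_sub, ofReal_one,
      show -(((γ : ℂ) - z) * v) = z * v + -γ * v by ring, exp_add]
    ring
  have hΓ : (Real.Gamma β : ℂ) ≠ 0 := ofReal_ne_zero.mpr (Real.Gamma_pos_of_pos hβ).ne'
  rw [hGamma, setIntegral_congr_fun measurableSet_Ioi h_integrand, integral_const_mul,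
    integral_cpow_mul_cexp_neg_mul_Ioi (by simpa using hβ) hw, Gamma_ofReal]
  field_simp
  ring

theorem neg_sub_sub_mul_cpow_ne_zero {α₁ α₂ β γ : ℝ} (hβ : 0 ≤ β) (hγ : 0 < γ)
    (hα : α₁ + |α₂| * γ ^ (-β) < 0) {z : ℂ} (hz : z.re ≤ 0) :
    -z - α₁ - α₂ * ((γ : ℂ) - z) ^ (-β : ℂ) ≠ 0 := by
  intro h
  have h_re := congrArg re h
  have h_bound : |(α₂ * ((γ : ℂ) - z) ^ (-β : ℂ)).re| ≤ |α₂| * γ ^ (-β) := by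
    refine (abs_re_le_norm _).trans ?_
    rw [norm_mul, norm_real, Real.norm_eq_abs]
    gcongr
    exact norm_cpow_neg_le hβ hγ (by simp only [sub_re, ofReal_re]; linarith)
  simp only [sub_re, neg_re, ofReal_re, zero_re] at h_re
  linarith [le_abs_self (α₂ * ((γ : ℂ) - z) ^ (-β : ℂ)).re]

/-- Example 2.10. Let `β, γ > 0` and `α₁, α₂ ∈ ℝ` and let `η` be the
gamma-type delay measure above. Then `h(z) = -z - α₁ - α₂ (γ - z)^{-β}` (principal branch)
for every `z` with `Re z ≤ 0`, and if `α₁ < 0` and `α₁ + |α₂| γ^{-β} < 0`, then `h(z) ≠ 0`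
for all `z` with `Re z ≤ 0`. -/
theorem statement15
    (α₁ α₂ β γ : ℝ) (hβ : 0 < β) (hγ : 0 < γ) :
    (∀ z : ℂ, z.re ≤ 0 →
      hGamma α₁ α₂ β γ z = -z - (α₁ : ℂ) - (α₂ : ℂ) * ((γ : ℂ) - z) ^ (-β : ℂ)) ∧
    (α₁ < 0 → α₁ + |α₂| * γ ^ (-β) < 0 →
      ∀ z : ℂ, z.re ≤ 0 → hGamma α₁ α₂ β γ z ≠ 0) := by
  refine ⟨fun z hz => hGamma_eq hβ hγ hz, fun _ hα z hz => ?_⟩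
  rw [hGamma_eq hβ hγ hz]
  exact neg_sub_sub_mul_cpow_ne_zero hβ.le hγ hα hz
end

section
/- Let α ∈ ℝ and β > 0 with α < β, let φ be the finite measure-type signed measure φ(du) = α e^{−βu} 1_{(0,∞)}(u) du and ξ the finite signed measure ξ(du) = α e^{(α−β)u} 1_{(0,∞)}(u) du, and let θ ∈ L²(ℝ) vanish on (−∞,0). Then θ∗ξ ∈ L²(ℝ), and the function ψ := θ + θ∗ξ, which vanishes Lebesgue-almost everywhere on (−∞,0), satisfies the level equation ψ(t) = ∫_{(0,∞)} ψ(t−u) dφ(u) + θ(t) for Lebesgue-almost all t ∈ ℝ. -/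
/-!
Write `φ` and `ξ` for the densities of the two measures; both lie in `L¹ ∩ L²`. A direct
computation gives the resolvent identity `ξ = φ + φ ∗ ξ`. Young's inequality
`‖w ∗ f‖₂ ≤ ‖w‖₁ ‖f‖₂` puts `ξ ∗ θ` in `L²`, so every convolution involved exists at every
point, and associativity turns the resolvent identity into
`φ ∗ ψ = φ ∗ θ + (φ ∗ ξ) ∗ θ = ξ ∗ θ = ψ - θ`.
-/

open MeasureTheory Set ContinuousLinearMap
open scoped ENNReal Convolution

theorem ENNReal.sq_lintegral_mul_le {α : Type*} [MeasurableSpace α] {μ : Measure α}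
    {w h : α → ℝ≥0∞} (hw : AEMeasurable w μ) (hh : AEMeasurable h μ) :
    (∫⁻ a, w a * h a ∂μ) ^ 2 ≤ (∫⁻ a, w a ∂μ) * ∫⁻ a, w a * h a ^ 2 ∂μ := by
  have hsplit : ∀ a, w a * h a = w a ^ (2⁻¹ : ℝ) * (w a * h a ^ 2) ^ (2⁻¹ : ℝ) := fun a => by
    rw [ENNReal.mul_rpow_of_nonneg _ _ (by norm_num), ← mul_assoc, ← ENNReal.rpow_add_of_nonneg _ _
      (by norm_num) (by norm_num), ← ENNReal.rpow_natCast, ← ENNReal.rpow_mul]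
    norm_num
  have holder := ENNReal.lintegral_mul_norm_pow_le hw (hw.mul (hh.pow_const 2))
    (p := 2⁻¹) (q := 2⁻¹) (by norm_num) (by norm_num) (by norm_num)
  calc (∫⁻ a, w a * h a ∂μ) ^ 2
      ≤ ((∫⁻ a, w a ∂μ) ^ (2⁻¹ : ℝ) * (∫⁻ a, w a * h a ^ 2 ∂μ) ^ (2⁻¹ : ℝ)) ^ 2 := by
        rw [lintegral_congr hsplit]; gcongr; exact holder
    _ = (∫⁻ a, w a ∂μ) * ∫⁻ a, w a * h a ^ 2 ∂μ := by
      rw [mul_pow, ← ENNReal.rpow_natCast, ← ENNReal.rpow_natCast, ← ENNReal.rpow_mul,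
        ← ENNReal.rpow_mul]
      norm_num

section Young

variable {G : Type*} [MeasurableSpace G] [AddCommGroup G] [MeasurableAdd₂ G] [MeasurableNeg G]
  {μ : Measure G} [μ.IsAddLeftInvariant] [μ.IsNegInvariant]

theorem convolutionExistsAt_of_memLp_two {f g : G → ℝ} (hf : MemLp f 2 μ) (hg : MemLp g 2 μ)
    (x : G) : ConvolutionExistsAt f g x (mul ℝ ℝ) μ :=
  hf.integrable_mul (hg.comp_measurePreserving (Measure.measurePreserving_sub_left μ x))

variable [SFinite μ]

theorem lintegral_sq_lintegral_mul_sub_le {w f : G → ℝ≥0∞} (hw : AEMeasurable w μ)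
    (hf : AEMeasurable f μ) :
    ∫⁻ x, (∫⁻ t, w t * f (x - t) ∂μ) ^ 2 ∂μ ≤ (∫⁻ t, w t ∂μ) ^ 2 * ∫⁻ x, f x ^ 2 ∂μ := by
  have hf_sub : AEMeasurable (fun p : G × G => f (p.1 - p.2)) (μ.prod μ) :=
    hf.comp_quasiMeasurePreserving (quasiMeasurePreserving_sub_of_right_invariant μ μ)
  have hprod : AEMeasurable (fun p : G × G => w p.2 * f (p.1 - p.2) ^ 2) (μ.prod μ) :=
    (hw.comp_quasiMeasurePreserving Measure.quasiMeasurePreserving_snd).mul (hf_sub.pow_const 2)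
  calc ∫⁻ x, (∫⁻ t, w t * f (x - t) ∂μ) ^ 2 ∂μ
      ≤ ∫⁻ x, (∫⁻ t, w t ∂μ) * ∫⁻ t, w t * f (x - t) ^ 2 ∂μ ∂μ :=
        lintegral_mono fun x => ENNReal.sq_lintegral_mul_le hw (hf.comp_quasiMeasurePreserving
          (Measure.measurePreserving_sub_left μ x).quasiMeasurePreserving)
    _ = (∫⁻ t, w t ∂μ) * ∫⁻ t, ∫⁻ x, w t * f (x - t) ^ 2 ∂μ ∂μ := by
        rw [lintegral_const_mul'' _ hprod.lintegral_prod_right', lintegral_lintegral_swap hprod]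
    _ = (∫⁻ t, w t ∂μ) ^ 2 * ∫⁻ x, f x ^ 2 ∂μ := by
        have hf2 : ∀ t, AEMeasurable (fun x => f (x - t) ^ 2) μ := fun t =>
          (hf.comp_quasiMeasurePreserving
            (measurePreserving_sub_right μ t).quasiMeasurePreserving).pow_const 2
        simp_rw [lintegral_const_mul'' _ (hf2 _), lintegral_sub_right_eq_self (fun x => f x ^ 2),
          lintegral_mul_const'' _ hw, sq, mul_assoc]

theorem MeasureTheory.Integrable.memLp_two_convolution {w f : G → ℝ} (hw : Integrable w μ)
    (hf : MemLp f 2 μ) :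
    MemLp (w ⋆[mul ℝ ℝ, μ] f) 2 μ := by
  refine ⟨(hw.1.convolution_integrand _ hf.1).integral_prod_right', ?_⟩
  have hf₂ :=
    (eLpNorm_lt_top_iff_lintegral_rpow_enorm_lt_top two_ne_zero ENNReal.ofNat_ne_top).1 hf.2
  rw [eLpNorm_lt_top_iff_lintegral_rpow_enorm_lt_top two_ne_zero ENNReal.ofNat_ne_top]
  simp only [ENNReal.toReal_ofNat, ENNReal.rpow_two] at hf₂ ⊢
  have hpointwise : ∀ x, ‖(w ⋆[mul ℝ ℝ, μ] f) x‖ₑ ≤ ∫⁻ t, ‖w t‖ₑ * ‖f (x - t)‖ₑ ∂μ := fun x =>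
    (enorm_integral_le_lintegral_enorm _).trans_eq (by simp [enorm_mul])
  calc ∫⁻ x, ‖(w ⋆[mul ℝ ℝ, μ] f) x‖ₑ ^ 2 ∂μ
      ≤ ∫⁻ x, (∫⁻ t, ‖w t‖ₑ * ‖f (x - t)‖ₑ ∂μ) ^ 2 ∂μ :=
        lintegral_mono fun x => pow_le_pow_left' (hpointwise x) 2
    _ ≤ (∫⁻ t, ‖w t‖ₑ ∂μ) ^ 2 * ∫⁻ x, ‖f x‖ₑ ^ 2 ∂μ :=
        lintegral_sq_lintegral_mul_sub_le hw.1.enorm hf.1.enorm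
    _ < ∞ := ENNReal.mul_lt_top (ENNReal.pow_lt_top hw.2) hf₂

theorem level_equation_of_resolvent {φ ξ θ : G → ℝ} (hφ : Integrable φ μ) (hφ₂ : MemLp φ 2 μ)
    (hξ : Integrable ξ μ) (hξ₂ : MemLp ξ 2 μ) (hθ : MemLp θ 2 μ)
    (hres : ξ = φ + φ ⋆[mul ℝ ℝ, μ] ξ) :
    θ + ξ ⋆[mul ℝ ℝ, μ] θ = φ ⋆[mul ℝ ℝ, μ] (θ + ξ ⋆[mul ℝ ℝ, μ] θ) + θ := by
  ext x
  have hassoc :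
      ((φ ⋆[mul ℝ ℝ, μ] ξ) ⋆[mul ℝ ℝ, μ] θ) x = (φ ⋆[mul ℝ ℝ, μ] (ξ ⋆[mul ℝ ℝ, μ] θ)) x :=
    convolution_assoc _ _ _ _ (fun a b c => mul_assoc a b c) hφ.1 hξ.1 hθ.1
      (.of_forall (convolutionExistsAt_of_memLp_two hφ₂ hξ₂))
      (.of_forall (convolutionExistsAt_of_memLp_two hξ₂.norm hθ.norm))
      (convolutionExistsAt_of_memLp_two hφ₂.norm (hξ.norm.memLp_two_convolution hθ.norm) x)
  have hξθ : (ξ ⋆[mul ℝ ℝ, μ] θ) x =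
      (φ ⋆[mul ℝ ℝ, μ] θ) x + (φ ⋆[mul ℝ ℝ, μ] (ξ ⋆[mul ℝ ℝ, μ] θ)) x := by
    conv_lhs => rw [hres]
    rw [(convolutionExistsAt_of_memLp_two hφ₂ hθ x).add_distrib
      (convolutionExistsAt_of_memLp_two (hφ.memLp_two_convolution hξ₂) hθ x), hassoc]
  rw [Pi.add_apply, Pi.add_apply, (convolutionExistsAt_of_memLp_two hφ₂ hθ x).distrib_add
    (convolutionExistsAt_of_memLp_two hφ₂ (hξ.memLp_two_convolution hθ) x), hξθ]
  ring

end Young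

theorem setIntegral_comp_sub_mul_eq_convolution {G : Type*} [MeasurableSpace G] [Sub G]
    {μ : Measure G} {s : Set G} (hs : MeasurableSet s) (g k : G → ℝ) (x : G) :
    ∫ u in s, g (x - u) * k u ∂μ = (s.indicator k ⋆[mul ℝ ℝ, μ] g) x := by
  rw [convolution_def, ← integral_indicator hs]
  congr 1 with u
  by_cases hu : u ∈ s <;> simp [hu, mul_comm]

/-- `φ` is `expKernel α (-β)` and `ξ` is `expKernel α (α - β)`. -/
noncomputable def expKernel (c r : ℝ) : ℝ → ℝ := (Ioi 0).indicator fun u => c * Real.exp (r * u)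

theorem integrable_expKernel (c : ℝ) {r : ℝ} (hr : r < 0) : Integrable (expKernel c r) :=
  (integrable_indicator_iff measurableSet_Ioi).2 ((integrableOn_exp_mul_Ioi hr 0).const_mul c)

theorem memLp_two_expKernel (c : ℝ) {r : ℝ} (hr : r < 0) : MemLp (expKernel c r) 2 := by
  refine (memLp_two_iff_integrable_sq (integrable_expKernel c hr).1).2
    ((integrable_expKernel (c ^ 2) (by linarith : 2 * r < 0)).congr (ae_of_all _ fun u => ?_))
  by_cases hu : u ∈ Ioi (0 : ℝ)
  · simp [expKernel, hu, mul_pow, ← Real.exp_nat_mul, mul_assoc]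
  · simp [expKernel, hu]

theorem integral_mul_exp_neg_mul (c x : ℝ) :
    ∫ t in (0)..x, c * Real.exp (-c * t) = 1 - Real.exp (-c * x) := by
  have hderiv : ∀ t ∈ uIcc 0 x,
      HasDerivAt (fun s => -Real.exp (-c * s)) (c * Real.exp (-c * t)) t := fun t _ => by
    have hlin : HasDerivAt (fun s => -c * s) (-c) t := by
      simpa using (hasDerivAt_id t).const_mul (-c)
    exact hlin.exp.neg.congr_deriv (by ring)
  rw [intervalIntegral.integral_eq_sub_of_hasDerivAt hderiv
    ((by fun_prop : Continuous fun t => c * Real.exp (-c * t)).intervalIntegrable _ _)]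
  simp only [mul_zero, Real.exp_zero]
  ring

theorem expKernel_resolvent (c r : ℝ) :
    expKernel c (c + r) = expKernel c r + expKernel c r ⋆[mul ℝ ℝ] expKernel c (c + r) := by
  ext x
  rw [Pi.add_apply, expKernel, expKernel,
    ← posConvolution_eq_convolution_indicator _ _ (mul ℝ ℝ) volume]
  by_cases hx : x ∈ Ioi 0
  · have hfactor : ∀ t, c * Real.exp (r * t) * (c * Real.exp ((c + r) * (x - t))) =
        c * Real.exp ((c + r) * x) * (c * Real.exp (-c * t)) := fun t => by
      rw [mul_mul_mul_comm, mul_mul_mul_comm _ (Real.exp _), ← Real.exp_add, ← Real.exp_add]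
      congr 2
      ring
    have hexp : Real.exp ((c + r) * x) * Real.exp (-c * x) = Real.exp (r * x) := by
      rw [← Real.exp_add]
      congr 1
      ring
    simp only [indicator_of_mem hx, posConvolution, mul_apply', hfactor]
    rw [intervalIntegral.integral_const_mul, integral_mul_exp_neg_mul]
    linear_combination c * hexp
  · simp [posConvolution, hx]

/-- Example 3.3. Let `α < β`, `β > 0`, `φ(du) = α e^{-βu} 1_{(0,∞)}(u) du`,
`ξ(du) = α e^{(α-β)u} 1_{(0,∞)}(u) du`, and let `θ ∈ L²` vanish on `(-∞,0)`. Then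
`θ ∗ ξ ∈ L²` and `ψ = θ + θ ∗ ξ`, which vanishes a.e. on `(-∞,0)`, satisfies
`ψ(t) = ∫_{(0,∞)} ψ(t-u) dφ(u) + θ(t)` for Lebesgue-a.e. `t`. -/
theorem statement19
    (α β : ℝ) (hβ : 0 < β) (hαβ : α < β)
    (θ : ℝ → ℝ) (hθ : MemLp θ 2 volume) (hθ0 : ∀ t : ℝ, t < 0 → θ t = 0)
    (ψ : ℝ → ℝ)
    (hψdef : ∀ t : ℝ,
      ψ t = θ t + ∫ u in Set.Ioi (0 : ℝ), θ (t - u) * (α * Real.exp ((α - β) * u))) :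
    MemLp
      (fun t : ℝ => ∫ u in Set.Ioi (0 : ℝ), θ (t - u) * (α * Real.exp ((α - β) * u)))
      2 volume ∧
    (∀ᵐ t : ℝ ∂volume, t < 0 → ψ t = 0) ∧
    ∀ᵐ t : ℝ ∂volume,
      ψ t = (∫ u in Set.Ioi (0 : ℝ), ψ (t - u) * (α * Real.exp (-β * u))) + θ t := by
  have hφ_rate : -β < 0 := neg_neg_of_pos hβ
  have hξ_rate : α - β < 0 := sub_neg.2 hαβ
  have hθξ : ∀ t, ∫ u in Ioi 0, θ (t - u) * (α * Real.exp ((α - β) * u)) =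
      (expKernel α (α - β) ⋆[mul ℝ ℝ] θ) t :=
    setIntegral_comp_sub_mul_eq_convolution measurableSet_Ioi _ _
  have hψ : ψ = θ + expKernel α (α - β) ⋆[mul ℝ ℝ] θ := funext fun t => by rw [hψdef, hθξ]; rfl
  have hres := expKernel_resolvent α (-β)
  rw [← sub_eq_add_neg] at hres
  refine ⟨?_, .of_forall fun t ht => ?_, .of_forall fun t => ?_⟩
  · simpa only [hθξ] using (integrable_expKernel α hξ_rate).memLp_two_convolution hθ
  · rw [hψdef, hθ0 t ht, zero_add]
    exact setIntegral_eq_zero_of_forall_eq_zero fun u hu => by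
      rw [hθ0 _ (by linarith [mem_Ioi.1 hu]), zero_mul]
  · rw [setIntegral_comp_sub_mul_eq_convolution measurableSet_Ioi, hψ]
    exact congrFun (level_equation_of_resolvent
      (integrable_expKernel α hφ_rate) (memLp_two_expKernel α hφ_rate)
      (integrable_expKernel α hξ_rate) (memLp_two_expKernel α hξ_rate) hθ hres) t
end
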